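/- arXiv:2604.12840 — 2 statements merged into one kernel-verified Lean document; each statement's English description precedes it below -/
import Mathlib

section
/- Under Assumptions A1 (continuity and compactness), A2 (strict dissipativity), A3 (terminal conditions) and A4 (terminal cost on orbit), there exist class-K_∞ functions ᾱ_low and ᾱ_up such that the rotated terminal cost satisfies ᾱ_low(||(x,u_f(x))||_{Π*}) ≤ Ṽ_f(x) ≤ ᾱ_up(||(x,u_f(x))||_{Π*}) for all x ∈ X_f, where u_f is the terminal control law from A3; in particular ᾱ_low can be taken equal to α_ℓ̃ from A2. -/
open Filter Topology

section EMPCDefs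

variable {E F : Type*} [NormedAddCommGroup E] [NormedAddCommGroup F]

/-- State trajectory `x_u(k, x₀)` of the system `x⁺ = f(x, u)` under input sequence `u`. -/
def traj (f : E × F → E) (x : E) (u : ℕ → F) : ℕ → E
  | 0 => x
  | k + 1 => f (traj f x u k, u k)

/-- `u ∈ U^N(x)`: input sequences of length `N` keeping the state in `X`. -/
def FeasN (f : E × F → E) (X : Set E) (U : Set F) (x : E) (N : ℕ) (u : ℕ → F) : Prop :=
  (∀ k < N, u k ∈ U) ∧ ∀ k ≤ N, traj f x u k ∈ X

/-- `u ∈ U^∞(x)`: infinite input sequences keeping the state in `X`. -/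
def FeasInf (f : E × F → E) (X : Set E) (U : Set F) (x : E) (u : ℕ → F) : Prop :=
  (∀ k, u k ∈ U) ∧ ∀ k, traj f x u k ∈ X

/-- The feasible set `X_N` of the terminal-constrained problem. -/
def XN (f : E × F → E) (X : Set E) (U : Set F) (Xf : Set E) (N : ℕ) : Set E :=
  {x | ∃ u : ℕ → F, FeasN f X U x N u ∧ traj f x u N ∈ Xf}

/-- The feasible set `X_∞`. -/
def XInf (f : E × F → E) (X : Set E) (U : Set F) : Set E :=
  {x | ∃ u : ℕ → F, FeasInf f X U x u}

/-- Distance `‖(x,u)‖_Π` of a state-input pair to a `p`-periodic orbit `Π = (i ↦ P i)`. -/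
noncomputable def distOrbit (p : ℕ) (P : ℕ → E × F) (z : E × F) : ℝ :=
  ⨅ i : Fin p, ‖z - P ↑i‖

/-- Distance `‖x‖_{Π_X}` of a state to the state part of a `p`-periodic orbit. -/
noncomputable def distOrbitX (p : ℕ) (PX : ℕ → E) (x : E) : ℝ :=
  ⨅ i : Fin p, ‖x - PX ↑i‖

/-- `Π = (Π_X, Π_U)` (given on `{0, …, p-1}`) is a feasible `p`-periodic orbit. -/
def FeasOrbit (f : E × F → E) (X : Set E) (U : Set F) (p : ℕ)
    (PX : ℕ → E) (PU : ℕ → F) : Prop :=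
  (∀ i < p, PX i ∈ X) ∧ (∀ i < p, PU i ∈ U) ∧
    ∀ i < p, PX ((i + 1) % p) = f (PX i, PU i)

/-- Average cost `ℓ_Π = (1/p) Σ_{i<p} ℓ(Π(i))` of a `p`-periodic orbit. -/
noncomputable def avgCost (ℓ : E × F → ℝ) (p : ℕ) (PX : ℕ → E) (PU : ℕ → F) : ℝ :=
  (1 / (p : ℝ)) * ∑ i ∈ Finset.range p, ℓ (PX i, PU i)

/-- Average `(1/p) Σ_{i<p} g(Π_X(i))` of a function over the state part of an orbit. -/
noncomputable def avgOrbit (g : E → ℝ) (p : ℕ) (PX : ℕ → E) : ℝ :=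
  (1 / (p : ℝ)) * ∑ i ∈ Finset.range p, g (PX i)

/-- `Π*` is an optimal periodic orbit: it is feasible and its average cost is the
infimum of the average costs over all feasible periodic orbits. -/
def IsOptimalOrbit (f : E × F → E) (X : Set E) (U : Set F) (ℓ : E × F → ℝ) (p : ℕ)
    (PX : ℕ → E) (PU : ℕ → F) : Prop :=
  FeasOrbit f X U p PX PU ∧
    ∀ q : ℕ, 0 < q → ∀ (QX : ℕ → E) (QU : ℕ → F),
      FeasOrbit f X U q QX QU → avgCost ℓ p PX PU ≤ avgCost ℓ q QX QU

/-- Accumulated stage cost `J^1_K(x, u)`. -/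
noncomputable def J1 (f : E × F → E) (ℓ : E × F → ℝ) (x : E) (u : ℕ → F) (K : ℕ) : ℝ :=
  ∑ k ∈ Finset.range K, ℓ (traj f x u k, u k)

/-- Finite-horizon cost functional `J_N(x, u)` with terminal cost `Vf`. -/
noncomputable def JN (f : E × F → E) (ℓ : E × F → ℝ) (Vf : E → ℝ) (x : E) (u : ℕ → F)
    (N : ℕ) : ℝ :=
  J1 f ℓ x u N + Vf (traj f x u N)

/-- Optimal value function `V_N(x)` of the terminal-constrained problem. -/
noncomputable def VN (f : E × F → E) (X : Set E) (U : Set F) (ℓ : E × F → ℝ) (Vf : E → ℝ)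
    (Xf : Set E) (N : ℕ) (x : E) : ℝ :=
  sInf ((fun u => JN f ℓ Vf x u N) '' {u : ℕ → F | FeasN f X U x N u ∧ traj f x u N ∈ Xf})

/-- Rotated stage cost `ℓ̃(x,u) = ℓ(x,u) - ℓ_{Π*} + λ(x) - λ(f(x,u))`. -/
def rotCost (f : E × F → E) (ℓ : E × F → ℝ) (lam : E → ℝ) (lp : ℝ) (z : E × F) : ℝ :=
  ℓ z - lp + lam z.1 - lam (f z)

/-- Finite-horizon Cesàro cost `J^ces_K(x,u) = Σ_{k<K} (1 - k/K) ℓ(x_u(k,x), u(k))`. -/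
noncomputable def Jces (f : E × F → E) (ℓ : E × F → ℝ) (x : E) (u : ℕ → F) (K : ℕ) : ℝ :=
  ∑ k ∈ Finset.range K, (1 - (k : ℝ) / (K : ℝ)) * ℓ (traj f x u k, u k)

/-- Infinite-horizon Cesàro cost `J^ces_∞(x,u) = limsup_K J^ces_K(x,u)`. -/
noncomputable def JcesInf (f : E × F → E) (ℓ : E × F → ℝ) (x : E) (u : ℕ → F) : ℝ :=
  limsup (fun K : ℕ => Jces f ℓ x u K) atTop

/-- Unconditioned infinite-horizon value `V^uc_∞(x)`. -/
noncomputable def VucInf (f : E × F → E) (X : Set E) (U : Set F) (ℓ : E × F → ℝ)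
    (x : E) : ℝ :=
  sInf ((fun u => JcesInf f ℓ x u) '' {u : ℕ → F | FeasInf f X U x u})

/-- Closed-loop state trajectory `x_μ(k, x)` under a feedback law `μ`. -/
def trajCl (f : E × F → E) (μ : E → F) (x : E) : ℕ → E
  | 0 => x
  | k + 1 => f (trajCl f μ x k, μ (trajCl f μ x k))

/-- Closed-loop finite-horizon Cesàro cost `J^cl_K(x, μ)`. -/
noncomputable def JclK (f : E × F → E) (ℓ : E × F → ℝ) (μ : E → F) (x : E) (K : ℕ) : ℝ :=
  ∑ k ∈ Finset.range K, (1 - (k : ℝ) / (K : ℝ)) * ℓ (trajCl f μ x k, μ (trajCl f μ x k))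

/-- Closed-loop infinite-horizon Cesàro cost `J^cl_∞(x, μ)`. -/
noncomputable def JclInf (f : E × F → E) (ℓ : E × F → ℝ) (μ : E → F) (x : E) : ℝ :=
  limsup (fun K : ℕ => JclK f ℓ μ x K) atTop

end EMPCDefs

/-- Class `K_∞` comparison functions `[0,∞) → [0,∞)`. -/
def IsKInf (α : ℝ → ℝ) : Prop :=
  ContinuousOn α (Set.Ici 0) ∧ StrictMonoOn α (Set.Ici 0) ∧ α 0 = 0 ∧
    Filter.Tendsto α Filter.atTop Filter.atTop

/-- Class `L` comparison functions `[0,∞) → [0,∞)`. -/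
def IsClassL (σ : ℝ → ℝ) : Prop :=
  ContinuousOn σ (Set.Ici 0) ∧ AntitoneOn σ (Set.Ici 0) ∧ (∀ t, 0 ≤ t → 0 ≤ σ t) ∧
    Filter.Tendsto σ Filter.atTop (nhds 0)

/-! With `W = V_f + λ`, strict dissipativity and the terminal decrease give
`α_ℓ̃(‖(x, u_f x)‖_Π) + W (f (x, u_f x)) ≤ W x` on `X_f`. On the orbit the rotated cost is
`≥ α_ℓ̃ 0 = 0`, so by A4 `W` does not increase around the cycle and is constant there, equal to its
orbit average `c`. A minimiser of `W` on the compact set `X_f` loses nothing in one step, hence lies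
on the orbit, so `W ≥ c` on `X_f`: this is the lower bound. For the upper bound, `W - c` is
uniformly continuous on `X_f` and vanishes on the orbit, so its supremum over `{‖(x, u_f x)‖_Π ≤ r}`
is monotone and tends to `0` as `r → 0⁺`; adding `r` to its mean over `[r, 2r]` gives a `K_∞`
majorant. -/

open Set MeasureTheory

-- The mean of `m` over `[r, 2r]`; after the substitution it is visibly monotone in `r`.
noncomputable def dilationAvg (m : ℝ → ℝ) (r : ℝ) : ℝ :=
  ∫ t in (1 : ℝ)..2, m (r * t)

section DilationAvg

variable {m : ℝ → ℝ}

theorem Monotone.le_dilationAvg (hm : Monotone m) {r : ℝ} (hr : 0 ≤ r) :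
    m r ≤ dilationAvg m r := by
  have := intervalIntegral.integral_mono_on (a := 1) (b := 2) (f := fun _ => m r) (μ := volume)
    (by norm_num) intervalIntegrable_const
    ((hm.comp (monotone_mul_left_of_nonneg hr)).monotoneOn _).intervalIntegrable
    (fun t ht => hm (le_mul_of_one_le_right hr ht.1))
  norm_num at this
  exact this

theorem Monotone.dilationAvg_le (hm : Monotone m) {r : ℝ} (hr : 0 ≤ r) :
    dilationAvg m r ≤ m (2 * r) := by
  have := intervalIntegral.integral_mono_on (a := 1) (b := 2) (g := fun _ => m (2 * r))
    (μ := volume) (by norm_num)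
    ((hm.comp (monotone_mul_left_of_nonneg hr)).monotoneOn _).intervalIntegrable
    intervalIntegrable_const (fun t ht => hm (by nlinarith [ht.2]))
  norm_num at this
  exact this

theorem Monotone.monotoneOn_dilationAvg (hm : Monotone m) : MonotoneOn (dilationAvg m) (Ici 0) :=
  fun r₁ h₁ r₂ _ h₁₂ => intervalIntegral.integral_mono_on (by norm_num)
    ((hm.comp (monotone_mul_left_of_nonneg h₁)).monotoneOn _).intervalIntegrable
    ((hm.comp (monotone_mul_left_of_nonneg (h₁.trans h₁₂))).monotoneOn _).intervalIntegrable
    (fun t ht => hm (mul_le_mul_of_nonneg_right h₁₂ (by linarith [ht.1])))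

theorem dilationAvg_eq_inv_mul_integral {r : ℝ} (hr : r ≠ 0) :
    dilationAvg m r = r⁻¹ * ∫ t in r..2 * r, m t := by
  simpa [dilationAvg, mul_comm] using intervalIntegral.integral_comp_mul_left (a := 1) (b := 2) m hr

theorem Monotone.continuousOn_dilationAvg (hm : Monotone m)
    (hm0 : Tendsto m (𝓝[≥] 0) (𝓝 (m 0))) : ContinuousOn (dilationAvg m) (Ici 0) := by
  intro r hr
  rcases (mem_Ici.mp hr).eq_or_lt with rfl | hr
  · have h2 : Tendsto (fun r : ℝ => m (2 * r)) (𝓝[≥] 0) (𝓝 (m 0)) := by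
      refine hm0.comp ?_
      simpa using ((continuous_const_mul (2 : ℝ)).continuousWithinAt (s := Ici 0) (x := 0)
        ).tendsto_nhdsWithin (fun r (hr : 0 ≤ r) => by simp; positivity)
    have h0 : dilationAvg m 0 = m 0 := by norm_num [dilationAvg]
    rw [ContinuousWithinAt, h0]
    refine tendsto_of_tendsto_of_tendsto_of_le_of_le' hm0 h2 ?_ ?_ <;>
      filter_upwards [self_mem_nhdsWithin] with r hr
    exacts [hm.le_dilationAvg hr, hm.dilationAvg_le hr]
  · let F : ℝ → ℝ := fun s => ∫ t in (0 : ℝ)..s, m t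
    have hint : ∀ a b : ℝ, IntervalIntegrable m volume a b :=
      fun a b => (hm.monotoneOn _).intervalIntegrable
    have hF : Continuous F := intervalIntegral.continuous_primitive hint 0
    have : ContinuousAt (fun s => s⁻¹ * (F (2 * s) - F s)) r := by
      have := hr.ne'
      fun_prop (disch := assumption)
    refine (this.congr ?_).continuousWithinAt
    filter_upwards [eventually_gt_nhds hr] with s hs
    rw [dilationAvg_eq_inv_mul_integral hs.ne',
      intervalIntegral.integral_interval_sub_left (hint 0 _) (hint 0 _)]

end DilationAvg

theorem Monotone.exists_isKInf_ge {m : ℝ → ℝ} (hm : Monotone m)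
    (hm0 : Tendsto m (𝓝[≥] 0) (𝓝 0)) : ∃ α : ℝ → ℝ, IsKInf α ∧ ∀ r, 0 ≤ r → m r ≤ α r := by
  have hm00 : m 0 = 0 := tendsto_nhds_unique (tendsto_pure_nhds m 0)
    (hm0.mono_left (pure_le_nhdsWithin self_mem_Ici))
  have hI0 : ∀ r, 0 ≤ r → 0 ≤ dilationAvg m r := fun r hr =>
    hm00 ▸ (hm hr).trans (hm.le_dilationAvg hr)
  refine ⟨fun r => r + dilationAvg m r, ⟨?_, ?_, ?_, ?_⟩, fun r hr => ?_⟩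
  · exact continuousOn_id.add (hm.continuousOn_dilationAvg (by rwa [hm00]))
  · exact fun r₁ h₁ r₂ h₂ h => add_lt_add_of_lt_of_le h (hm.monotoneOn_dilationAvg h₁ h₂ h.le)
  · norm_num [dilationAvg, hm00]
  · refine tendsto_atTop_mono' _ ?_ tendsto_id
    filter_upwards [eventually_ge_atTop 0] with r hr
    exact le_add_of_nonneg_right (hI0 r hr)
  · exact (hm.le_dilationAvg hr).trans (le_add_of_nonneg_left hr)

theorem IsCompact.exists_isKInf_le {E : Type*} [PseudoMetricSpace E] {K : Set E}
    (hK : IsCompact K) {h : E → ℝ} (hh : ContinuousOn h K) {d : E → ℝ}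
    (hd : ∀ x ∈ K, ∃ y ∈ K, dist x y ≤ d x ∧ h y ≤ 0) :
    ∃ α : ℝ → ℝ, IsKInf α ∧ ∀ x ∈ K, h x ≤ α (d x) := by
  let m : ℝ → ℝ := fun r => sSup (insert 0 (h '' {x ∈ K | d x ≤ r}))
  have hbdd : ∀ r, BddAbove (insert 0 (h '' {x ∈ K | d x ≤ r})) := fun r =>
    ((hK.image_of_continuousOn hh).bddAbove.mono (image_mono (sep_subset _ _))).insert 0
  have hm : Monotone m := fun r₁ r₂ h₁₂ => csSup_le_csSup (hbdd r₂) (insert_nonempty _ _)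
    (insert_subset_insert (image_mono fun x hx => ⟨hx.1, hx.2.trans h₁₂⟩))
  have hm0 : Tendsto m (𝓝[≥] 0) (𝓝 0) := by
    refine tendsto_order.2 ⟨fun a ha => Eventually.of_forall fun r =>
      ha.trans_le (le_csSup (hbdd r) (mem_insert _ _)), fun ε hε => ?_⟩
    obtain ⟨δ, hδ, hδh⟩ := Metric.uniformContinuousOn_iff.1
      (hK.uniformContinuousOn_of_continuous hh) (ε / 2) (half_pos hε)
    filter_upwards [nhdsWithin_le_nhds (eventually_lt_nhds hδ)] with r hr
    refine (csSup_le (insert_nonempty _ _) ?_).trans_lt (half_lt_self hε)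
    rintro _ (rfl | ⟨x, ⟨hx, hxr⟩, rfl⟩)
    · positivity
    obtain ⟨y, hy, hxy, hy0⟩ := hd x hx
    have := hδh x hx y hy (hxy.trans_lt (hxr.trans_lt hr))
    linarith [(abs_lt.1 (Real.dist_eq _ _ ▸ this)).2]
  obtain ⟨α, hα, hmα⟩ := hm.exists_isKInf_ge hm0
  refine ⟨α, hα, fun x hx => ?_⟩
  obtain ⟨y, -, hxy, -⟩ := hd x hx
  exact (le_csSup (hbdd _) (mem_insert_of_mem _ ⟨x, ⟨hx, le_rfl⟩, rfl⟩)).trans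
    (hmα _ (dist_nonneg.trans hxy))

theorem IsKInf.eq_zero_of_le_zero {α : ℝ → ℝ} (hα : IsKInf α) {r : ℝ} (hr : 0 ≤ r)
    (hαr : α r ≤ 0) : r = 0 := by
  by_contra hne
  have := hα.2.1 self_mem_Ici (mem_Ici.mpr hr) (hr.lt_of_ne' hne)
  linarith [hα.2.2.1]

theorem IsCompact.le_of_isKInf_decrease {E : Type*} [TopologicalSpace E] {K : Set E}
    (hK : IsCompact K) {W D : E → ℝ} {g : E → E} {α : ℝ → ℝ} {c : ℝ}
    (hW : ContinuousOn W K) (hg : MapsTo g K K) (hα : IsKInf α) (hD : ∀ x, 0 ≤ D x)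
    (hdec : ∀ x ∈ K, α (D x) + W (g x) ≤ W x) (hc : ∀ x ∈ K, D x = 0 → c ≤ W x) :
    ∀ x ∈ K, c ≤ W x := by
  intro x hx
  obtain ⟨z, hz, hzmin⟩ := hK.exists_isMinOn ⟨x, hx⟩ hW
  have h1 := hdec z hz
  have h2 : W z ≤ W (g z) := hzmin (hg hz)
  have hDz : D z = 0 := hα.eq_zero_of_le_zero (hD z) (by linarith)
  exact (hc z hz hDz).trans (hzmin hx)

theorem apply_eq_apply_zero_of_mod_succ_le {β : Type*} [PartialOrder β] {p : ℕ} {g : ℕ → β}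
    (hg : ∀ i < p, g ((i + 1) % p) ≤ g i) {i : ℕ} (hi : i < p) : g i = g 0 := by
  have hanti : ∀ i j, i ≤ j → j < p → g j ≤ g i := by
    intro i j hij
    induction j, hij using Nat.le_induction with
    | base => exact fun _ => le_rfl
    | succ j _ ih =>
      intro hj
      simpa [Nat.mod_eq_of_lt hj] using (hg j (by omega)).trans (ih (by omega))
  have hwrap : g 0 ≤ g (p - 1) := by
    simpa [Nat.sub_add_cancel (by omega : 1 ≤ p)] using hg (p - 1) (by omega)
  exact le_antisymm (hanti 0 i (Nat.zero_le _) hi)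
    (hwrap.trans (hanti i (p - 1) (by omega) (by omega)))

theorem avgOrbit_add {E : Type*} (g₁ g₂ : E → ℝ) (p : ℕ) (PX : ℕ → E) :
    avgOrbit (fun x => g₁ x + g₂ x) p PX = avgOrbit g₁ p PX + avgOrbit g₂ p PX := by
  simp only [avgOrbit, Finset.sum_add_distrib, mul_add]

theorem FeasOrbit.apply_eq_avgOrbit {E F : Type*} {f : E × F → E} {X : Set E} {U : Set F}
    {p : ℕ} {PX : ℕ → E} {PU : ℕ → F} (hP : FeasOrbit f X U p PX PU) {W : E → ℝ}
    (hW : ∀ i < p, W (f (PX i, PU i)) ≤ W (PX i)) {i : ℕ} (hi : i < p) :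
    W (PX i) = avgOrbit W p PX := by
  have hconst : ∀ j < p, W (PX j) = W (PX 0) :=
    fun j => apply_eq_apply_zero_of_mod_succ_le (g := fun j => W (PX j))
      fun j hj => (hP.2.2 j hj).symm ▸ hW j hj
  have hp : (p : ℝ) ≠ 0 := by norm_cast; omega
  rw [avgOrbit, Finset.sum_congr rfl fun j hj => hconst j (Finset.mem_range.mp hj), hconst i hi,
    Finset.sum_const, Finset.card_range, nsmul_eq_mul]
  field_simp

section DistOrbit

variable {E F : Type*} [NormedAddCommGroup E] [NormedAddCommGroup F]

theorem distOrbit_nonneg (p : ℕ) (P : ℕ → E × F) (z : E × F) : 0 ≤ distOrbit p P z :=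
  Real.iInf_nonneg fun _ => norm_nonneg _

theorem exists_norm_sub_eq_distOrbit {p : ℕ} (hp : 0 < p) (P : ℕ → E × F) (z : E × F) :
    ∃ i < p, ‖z - P i‖ = distOrbit p P z := by
  have : Nonempty (Fin p) := ⟨⟨0, hp⟩⟩
  obtain ⟨i, hi⟩ := exists_eq_ciInf_of_finite (f := fun i : Fin p => ‖z - P i‖)
  exact ⟨i, i.isLt, hi⟩

theorem distOrbit_apply {p : ℕ} (P : ℕ → E × F) {i : ℕ} (hi : i < p) : distOrbit p P (P i) = 0 := by
  refine le_antisymm ?_ (distOrbit_nonneg p P _)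
  simpa [distOrbit] using ciInf_le (f := fun j : Fin p => ‖P i - P j‖)
    ⟨0, fun _ ⟨_, h⟩ => h ▸ norm_nonneg _⟩ ⟨i, hi⟩

theorem exists_eq_of_distOrbit_eq_zero {p : ℕ} (hp : 0 < p) {P : ℕ → E × F} {z : E × F}
    (hz : distOrbit p P z = 0) : ∃ i < p, z = P i := by
  obtain ⟨i, hi, hzi⟩ := exists_norm_sub_eq_distOrbit hp P z
  exact ⟨i, hi, sub_eq_zero.mp (norm_eq_zero.mp (hzi.trans hz))⟩

end DistOrbit

theorem stmt1_general
    (dn dm : ℕ)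
    (X : Set (EuclideanSpace ℝ (Fin dn))) (U : Set (EuclideanSpace ℝ (Fin dm)))
    (f : EuclideanSpace ℝ (Fin dn) × EuclideanSpace ℝ (Fin dm) → EuclideanSpace ℝ (Fin dn))
    (ℓ : EuclideanSpace ℝ (Fin dn) × EuclideanSpace ℝ (Fin dm) → ℝ)
    (p : ℕ) (hp : 0 < p)
    (PX : ℕ → EuclideanSpace ℝ (Fin dn)) (PU : ℕ → EuclideanSpace ℝ (Fin dm))
    (hopt : IsOptimalOrbit f X U ℓ p PX PU)
    -- A2 (strict dissipativity)
    (lam : EuclideanSpace ℝ (Fin dn) → ℝ) (hlamc : ContinuousOn lam X)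
    (αl : ℝ → ℝ) (hαl : IsKInf αl)
    (hdiss : ∀ x ∈ X, ∀ u ∈ U, f (x, u) ∈ X →
      αl (distOrbit p (fun i => (PX i, PU i)) (x, u)) ≤
        rotCost f ℓ lam (avgCost ℓ p PX PU) (x, u))
    -- A3 (terminal conditions)
    (Xf : Set (EuclideanSpace ℝ (Fin dn))) (hXfc : IsCompact Xf) (hXfX : Xf ⊆ X)
    (hPXf : ∀ i < p, PX i ∈ Xf)
    (Vf : EuclideanSpace ℝ (Fin dn) → ℝ) (hVfc : ContinuousOn Vf Xf)
    (uf : EuclideanSpace ℝ (Fin dn) → EuclideanSpace ℝ (Fin dm))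
    (hufU : ∀ x ∈ Xf, uf x ∈ U) (hufX : ∀ x ∈ Xf, f (x, uf x) ∈ X)
    (hufXf : ∀ x ∈ Xf, f (x, uf x) ∈ Xf)
    (hufD : ∀ x ∈ Xf, Vf (f (x, uf x)) + ℓ (x, uf x) - avgCost ℓ p PX PU ≤ Vf x)
    -- A4 (terminal cost on the optimal orbit)
    (hA4 : ∀ i < p, Vf (PX i) = ℓ (PX i, PU i) - avgCost ℓ p PX PU + Vf (f (PX i, PU i))) :
    ∃ αlow αup : ℝ → ℝ, IsKInf αlow ∧ IsKInf αup ∧ αlow = αl ∧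
      ∀ x ∈ Xf,
        αlow (distOrbit p (fun i => (PX i, PU i)) (x, uf x)) ≤
            Vf x + lam x - avgOrbit Vf p PX - avgOrbit lam p PX ∧
          Vf x + lam x - avgOrbit Vf p PX - avgOrbit lam p PX ≤
            αup (distOrbit p (fun i => (PX i, PU i)) (x, uf x)) := by
  set P : ℕ → _ := fun i => (PX i, PU i)
  set W := fun x => Vf x + lam x
  set c := avgOrbit W p PX
  have hc : c = avgOrbit Vf p PX + avgOrbit lam p PX := avgOrbit_add Vf lam p PX
  have hWc : ContinuousOn W Xf := hVfc.add (hlamc.mono hXfX)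
  have hdec : ∀ x ∈ Xf, αl (distOrbit p P (x, uf x)) + W (f (x, uf x)) ≤ W x := fun x hx => by
    have := hdiss x (hXfX hx) (uf x) (hufU x hx) (hufX x hx)
    simp only [rotCost] at this
    linarith [hufD x hx]
  -- on the orbit the rotated stage cost is `≥ αl 0 = 0`, and by A4 it is the decrease of `W`
  have hWorbit : ∀ i < p, W (PX i) = c := fun i hi => by
    refine hopt.1.apply_eq_avgOrbit (fun j hj => ?_) hi
    have hfX : f (PX j, PU j) ∈ X := hopt.1.2.2 j hj ▸ hopt.1.1 _ (Nat.mod_lt _ hp)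
    have := hdiss _ (hopt.1.1 j hj) _ (hopt.1.2.1 j hj) hfX
    rw [distOrbit_apply P hj, hαl.2.2.1, rotCost] at this
    linarith [hA4 j hj]
  have hlow : ∀ x ∈ Xf, c ≤ W x :=
    hXfc.le_of_isKInf_decrease hWc hufXf hαl (fun x => distOrbit_nonneg p P _) hdec
      fun x _ hx0 => by
        obtain ⟨i, hi, hxi⟩ := exists_eq_of_distOrbit_eq_zero hp hx0
        rw [show x = PX i from congrArg Prod.fst hxi, hWorbit i hi]
  obtain ⟨αup, hαup, hup⟩ := hXfc.exists_isKInf_le (h := fun x => W x - c)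
    (hWc.sub continuousOn_const) (d := fun x => distOrbit p P (x, uf x))
    fun x _ => by
      obtain ⟨i, hi, hxi⟩ := exists_norm_sub_eq_distOrbit hp P (x, uf x)
      refine ⟨PX i, hPXf i hi, ?_, by simp [hWorbit i hi]⟩
      rw [dist_eq_norm, ← hxi]
      exact norm_fst_le ((x, uf x) - P i)
  refine ⟨αl, αup, hαl, hαup, rfl, fun x hx => ⟨?_, ?_⟩⟩
  · linarith [hdec x hx, hlow _ (hufXf x hx)]
  · linarith [hup x hx]

theorem stmt1
    (dn dm : ℕ)
    (X : Set (EuclideanSpace ℝ (Fin dn))) (U : Set (EuclideanSpace ℝ (Fin dm)))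
    (f : EuclideanSpace ℝ (Fin dn) × EuclideanSpace ℝ (Fin dm) → EuclideanSpace ℝ (Fin dn))
    (ℓ : EuclideanSpace ℝ (Fin dn) × EuclideanSpace ℝ (Fin dm) → ℝ)
    (p : ℕ) (hp : 0 < p)
    (PX : ℕ → EuclideanSpace ℝ (Fin dn)) (PU : ℕ → EuclideanSpace ℝ (Fin dm))
    (hopt : IsOptimalOrbit f X U ℓ p PX PU)
    -- A1 (continuity and compactness)
    (hcomp : IsCompact (X ×ˢ U))
    (hfc : ContinuousOn f (X ×ˢ U)) (hlc : ContinuousOn ℓ (X ×ˢ U))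
    -- A2 (strict dissipativity)
    (lam : EuclideanSpace ℝ (Fin dn) → ℝ) (hlamc : ContinuousOn lam X)
    (αl : ℝ → ℝ) (hαl : IsKInf αl)
    (hdiss : ∀ x ∈ X, ∀ u ∈ U, f (x, u) ∈ X →
      αl (distOrbit p (fun i => (PX i, PU i)) (x, u)) ≤
        rotCost f ℓ lam (avgCost ℓ p PX PU) (x, u))
    -- A3 (terminal conditions)
    (Xf : Set (EuclideanSpace ℝ (Fin dn))) (hXfc : IsCompact Xf) (hXfX : Xf ⊆ X)
    (hPXf : ∀ i < p, PX i ∈ Xf)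
    (Vf : EuclideanSpace ℝ (Fin dn) → ℝ) (hVfc : ContinuousOn Vf Xf)
    (uf : EuclideanSpace ℝ (Fin dn) → EuclideanSpace ℝ (Fin dm))
    (hufU : ∀ x ∈ Xf, uf x ∈ U) (hufX : ∀ x ∈ Xf, f (x, uf x) ∈ X)
    (hufXf : ∀ x ∈ Xf, f (x, uf x) ∈ Xf)
    (hufD : ∀ x ∈ Xf, Vf (f (x, uf x)) + ℓ (x, uf x) - avgCost ℓ p PX PU ≤ Vf x)
    -- A4 (terminal cost on the optimal orbit)
    (hA4 : ∀ i < p, Vf (PX i) = ℓ (PX i, PU i) - avgCost ℓ p PX PU + Vf (f (PX i, PU i))) :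
    ∃ αlow αup : ℝ → ℝ, IsKInf αlow ∧ IsKInf αup ∧ αlow = αl ∧
      ∀ x ∈ Xf,
        αlow (distOrbit p (fun i => (PX i, PU i)) (x, uf x)) ≤
            Vf x + lam x - avgOrbit Vf p PX - avgOrbit lam p PX ∧
          Vf x + lam x - avgOrbit Vf p PX - avgOrbit lam p PX ≤
            αup (distOrbit p (fun i => (PX i, PU i)) (x, uf x)) :=
  stmt1_general dn dm X U f ℓ p hp PX PU hopt lam hlamc αl hαl hdiss Xf hXfc hXfX hPXf Vf hVfc uf
    hufU hufX hufXf hufD hA4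
end

section
/- Under Assumptions A1 (continuity and compactness), A2 (strict dissipativity), A3 (terminal conditions), A4 (terminal cost on orbit) and A5 (bound on V_N), the rotated value function Ṽ_N is a candidate Lyapunov function: there exist class-K_∞ functions α_1, α_2 such that for all x ∈ X_N, (i) α_1(||(x,μ_N(x))||_{Π*}) ≤ Ṽ_N(x) ≤ α_2(||x||_{Π*_X}), and (ii) Ṽ_N(f(x,μ_N(x))) − Ṽ_N(x) ≤ −ℓ̃(x,μ_N(x)). -/
open Filter Topology

/-!
Rotating by the storage function shifts every cost `J_N(x, ·)` by the same amount
`λ(x) - V_{Π*} - λ_{Π*} - N ℓ_{Π*}`, so `Ṽ_N = V_N + λ - const` and both problems share their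
minimizers. The rotated stage cost is nonnegative by dissipativity and, summing to zero over the
orbit, vanishes on it; by A4 the rotated terminal cost vanishes on the orbit as well, and it is
nonnegative on the compact `X_f` because the terminal controller decreases it strictly away from
the orbit. Hence `Ṽ_N(x) ≥ ℓ̃(x, μ_N(x)) ≥ α_ℓ̃(‖(x, μ_N(x))‖_{Π*})`. Since `Ṽ_N ≤ 0` on the
orbit, A5 together with a `K_∞` modulus of continuity of `λ` on the compact `X` bounds `Ṽ_N`
from above, and the shifted optimal input completed by `u_f` gives the decrease.
-/
open Set

namespace IsKInf

variable {α : ℝ → ℝ}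

lemma monotoneOn (hα : IsKInf α) : MonotoneOn α (Ici 0) := hα.2.1.monotoneOn

lemma nonneg (hα : IsKInf α) {t : ℝ} (ht : 0 ≤ t) : 0 ≤ α t :=
  hα.2.2.1 ▸ hα.monotoneOn self_mem_Ici ht ht

lemma pos (hα : IsKInf α) {t : ℝ} (ht : 0 < t) : 0 < α t :=
  hα.2.2.1 ▸ hα.2.1 self_mem_Ici ht.le ht

lemma add_monotoneOn (hα : IsKInf α) {S : ℝ → ℝ} (hSc : ContinuousOn S (Ici 0))
    (hSm : MonotoneOn S (Ici 0)) (hS0 : S 0 = 0) : IsKInf (fun t => α t + S t) := by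
  have hS_nonneg : ∀ t, 0 ≤ t → 0 ≤ S t := fun t ht => hS0 ▸ hSm self_mem_Ici ht ht
  refine ⟨hα.1.add hSc, hα.2.1.add_monotone hSm, by simp [hα.2.2.1, hS0], ?_⟩
  refine tendsto_atTop_mono' _ ?_ hα.2.2.2
  filter_upwards [Filter.eventually_ge_atTop 0] with t ht
  linarith [hS_nonneg t ht]

end IsKInf

lemma isKInf_id : IsKInf id :=
  ⟨continuousOn_id, strictMono_id.strictMonoOn _, rfl, Filter.tendsto_id⟩

noncomputable def rampSum (d : ℕ → ℝ) (t : ℝ) : ℝ :=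
  ∑' n, (1 / 2 : ℝ) ^ n * min 1 (max 0 t / d n)

section rampSum

variable {d : ℕ → ℝ}

lemma rampSum_term_nonneg (hd : ∀ n, 0 < d n) (n : ℕ) (t : ℝ) :
    0 ≤ (1 / 2 : ℝ) ^ n * min 1 (max 0 t / d n) :=
  mul_nonneg (by positivity) (le_min zero_le_one (div_nonneg (le_max_left _ _) (hd n).le))

lemma rampSum_term_le (n : ℕ) (t : ℝ) :
    (1 / 2 : ℝ) ^ n * min 1 (max 0 t / d n) ≤ (1 / 2) ^ n :=
  mul_le_of_le_one_right (by positivity) (min_le_left _ _)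

lemma summable_rampSum_term (hd : ∀ n, 0 < d n) (t : ℝ) :
    Summable fun n => (1 / 2 : ℝ) ^ n * min 1 (max 0 t / d n) :=
  summable_geometric_two.of_nonneg_of_le (rampSum_term_nonneg hd · t) (rampSum_term_le · t)

lemma continuous_rampSum (hd : ∀ n, 0 < d n) : Continuous (rampSum d) := by
  refine continuous_tsum (fun n => ?_) summable_geometric_two fun n t => ?_
  · fun_prop (disch := exact (hd n).ne')
  · rw [Real.norm_of_nonneg (rampSum_term_nonneg hd n t)]
    exact rampSum_term_le n t

lemma monotone_rampSum (hd : ∀ n, 0 < d n) : Monotone (rampSum d) := fun a b hab =>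
  (summable_rampSum_term hd a).tsum_le_tsum (fun n => by gcongr; exact (hd n).le)
    (summable_rampSum_term hd b)

lemma rampSum_zero : rampSum d 0 = 0 := by simp [rampSum]

lemma pow_le_rampSum (hd : ∀ n, 0 < d n) {n : ℕ} {t : ℝ} (ht : d n ≤ t) :
    (1 / 2 : ℝ) ^ n ≤ rampSum d t := by
  have hterm : (1 / 2 : ℝ) ^ n * min 1 (max 0 t / d n) = (1 / 2) ^ n := by
    rw [min_eq_left (by rw [le_div_iff₀ (hd n), one_mul]; exact ht.trans (le_max_right _ _)),
      mul_one]
  exact hterm ▸ (summable_rampSum_term hd t).le_tsum n fun j _ => rampSum_term_nonneg hd j t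

end rampSum

lemma exists_isKInf_ge (g : ℝ → ℝ) (M : ℝ) (hgM : ∀ t, 0 ≤ t → g t ≤ M)
    (hg0 : ∀ ε > 0, ∃ δ > 0, ∀ t, 0 ≤ t → t ≤ δ → g t ≤ ε) :
    ∃ β : ℝ → ℝ, IsKInf β ∧ ∀ t, 0 ≤ t → g t ≤ β t := by
  choose δ hδ_pos hδ using fun n : ℕ => hg0 ((1 / 2) ^ n) (by positivity)
  set d : ℕ → ℝ := fun n => min (δ n) ((1 / 2) ^ n)
  have hd : ∀ n, 0 < d n := fun n => lt_min (hδ_pos n) (by positivity)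
  have hS_nonneg : ∀ t, 0 ≤ t → 0 ≤ rampSum d t :=
    fun t ht => rampSum_zero (d := d) ▸ monotone_rampSum hd ht
  have hmaj : ∀ t, 0 ≤ t → g t ≤ (|M| + 2) * rampSum d t := by
    intro t ht
    rcases ht.eq_or_lt with rfl | ht
    · have hg : g 0 ≤ 0 := le_of_forall_pos_le_add fun ε hε => by
        obtain ⟨n, hn⟩ := exists_pow_lt_of_lt_one hε (by norm_num : (1 / 2 : ℝ) < 1)
        linarith [hδ n 0 le_rfl (hδ_pos n).le]
      simpa [rampSum_zero] using hg
    have hex : ∃ n, d n ≤ t := by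
      obtain ⟨n, hn⟩ := exists_pow_lt_of_lt_one ht (by norm_num : (1 / 2 : ℝ) < 1)
      exact ⟨n, (min_le_right _ _).trans hn.le⟩
    -- for the least `n` with `dₙ ≤ t`: `g t ≤ 2⁻⁽ⁿ⁻¹⁾ ≤ 2 · rampSum d t`, or `g t ≤ M` if `n = 0`
    have hS := pow_le_rampSum hd (Nat.find_spec hex)
    cases hm : Nat.find hex with
    | zero =>
      rw [hm, pow_zero] at hS
      nlinarith [le_abs_self M, hgM t ht.le, abs_nonneg M]
    | succ m =>
      have hgt : g t ≤ (1 / 2) ^ m :=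
        hδ m t ht.le ((not_le.mp (Nat.find_min hex (by omega))).le.trans (min_le_left _ _))
      rw [hm, pow_succ] at hS
      nlinarith [abs_nonneg M, hS_nonneg t ht.le, pow_nonneg (by norm_num : (0 : ℝ) ≤ 1 / 2) m]
  refine ⟨fun t => id t + (|M| + 2) * rampSum d t,
    isKInf_id.add_monotoneOn (continuous_const.mul (continuous_rampSum hd)).continuousOn ?_ ?_,
    fun t ht => (hmaj t ht).trans (le_add_of_nonneg_left ht)⟩
  · exact ((monotone_rampSum hd).const_mul (by positivity)).monotoneOn _
  · simp [rampSum_zero]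

lemma IsCompact.exists_isKInf_modulus {E : Type*} [PseudoMetricSpace E] {K : Set E}
    (hK : IsCompact K) {φ : E → ℝ} (hφ : ContinuousOn φ K) :
    ∃ β : ℝ → ℝ, IsKInf β ∧ ∀ a ∈ K, ∀ b ∈ K, |φ a - φ b| ≤ β (dist a b) := by
  set D : ℝ → Set ℝ := fun t =>
    (fun q : E × E => |φ q.1 - φ q.2|) '' {q | q.1 ∈ K ∧ q.2 ∈ K ∧ dist q.1 q.2 ≤ t}
  obtain ⟨C, hC⟩ := hK.exists_bound_of_continuousOn hφ
  have hD_le : ∀ t, ∀ r ∈ D t, r ≤ 2 * |C| := by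
    rintro t _ ⟨⟨a, b⟩, ⟨ha, hb, -⟩, rfl⟩
    have hCa := hC a ha
    have hCb := hC b hb
    rw [Real.norm_eq_abs] at hCa hCb
    linarith [abs_sub (φ a) (φ b), le_abs_self C]
  have hsmall : ∀ ε > 0, ∃ δ > 0, ∀ t, 0 ≤ t → t ≤ δ → sSup (D t) ≤ ε := by
    intro ε hε
    obtain ⟨δ, hδ, hφδ⟩ :=
      Metric.uniformContinuousOn_iff.mp (hK.uniformContinuousOn_of_continuous hφ) ε hε
    refine ⟨δ / 2, half_pos hδ, fun t _ htδ => Real.sSup_le ?_ hε.le⟩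
    rintro _ ⟨⟨a, b⟩, ⟨ha, hb, hab⟩, rfl⟩
    exact (hφδ a ha b hb (by linarith)).le
  obtain ⟨β, hβ, hβg⟩ := exists_isKInf_ge (fun t => sSup (D t)) (2 * |C|)
    (fun t _ => Real.sSup_le (hD_le t) (by positivity)) hsmall
  refine ⟨β, hβ, fun a ha b hb => le_trans ?_ (hβg _ dist_nonneg)⟩
  exact le_csSup ⟨_, hD_le _⟩ ⟨(a, b), ⟨ha, hb, le_rfl⟩, rfl⟩

lemma exists_lt_of_forall_sum_range_le (a : ℕ → ℝ) (C : ℝ)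
    (h : ∀ n, ∑ k ∈ Finset.range n, a k ≤ C) {η : ℝ} (hη : 0 < η) : ∃ k, a k < η := by
  by_contra! H
  obtain ⟨n, hn⟩ := exists_nat_gt (C / η)
  have := Finset.card_nsmul_le_sum (Finset.range n) a η fun k _ => H k
  rw [Finset.card_range, nsmul_eq_mul] at this
  rw [div_lt_iff₀ hη] at hn
  linarith [h n]

/-- If `W x < 0`, the decrements `c` along the orbit of `x` under `s` have bounded partial sums,
so some iterate comes close to `Z`; uniform continuity then puts `W` there above `W x`, although
`W` never increases along the orbit. -/
lemma IsCompact.nonneg_of_descent {E : Type*} [PseudoMetricSpace E] {K Z : Set E}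
    (hK : IsCompact K) {W : E → ℝ} (hW : ContinuousOn W K) (hZK : Z ⊆ K)
    (hWZ : ∀ z ∈ Z, 0 ≤ W z) {s : E → E} (hs : MapsTo s K K) {c : E → ℝ}
    (hc : ∀ y ∈ K, 0 ≤ c y) (hcZ : ∀ δ > 0, ∃ η > 0, ∀ y ∈ K, c y < η → ∃ z ∈ Z, dist y z < δ)
    (hdec : ∀ y ∈ K, W (s y) + c y ≤ W y) : ∀ x ∈ K, 0 ≤ W x := by
  intro x hx
  by_contra! hneg
  obtain ⟨δ, hδ, hWδ⟩ := Metric.uniformContinuousOn_iff.mp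
    (hK.uniformContinuousOn_of_continuous hW) (-W x) (neg_pos.mpr hneg)
  obtain ⟨η, hη, hηZ⟩ := hcZ δ hδ
  have hyK : ∀ k, s^[k] x ∈ K := fun k => hs.iterate k hx
  have hdescent : ∀ n, W (s^[n] x) + ∑ k ∈ Finset.range n, c (s^[k] x) ≤ W x := by
    intro n
    induction n with
    | zero => simp
    | succ n ih =>
      rw [Finset.sum_range_succ, Function.iterate_succ_apply']
      linarith [hdec _ (hyK n)]
  obtain ⟨m, hm⟩ := hK.bddBelow_image hW
  obtain ⟨k, hk⟩ := exists_lt_of_forall_sum_range_le (fun k => c (s^[k] x)) (W x - m)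
    (fun n => by linarith [hdescent n, hm ⟨_, hyK n, rfl⟩]) hη
  obtain ⟨z, hz, hyz⟩ := hηZ _ (hyK k) hk
  have hclose := (abs_lt.mp (Real.dist_eq _ _ ▸ hWδ _ (hyK k) z (hZK hz) hyz)).1
  have hsum_nonneg : 0 ≤ ∑ j ∈ Finset.range k, c (s^[j] x) :=
    Finset.sum_nonneg fun j _ => hc _ (hyK j)
  linarith [hdescent k, hWZ z hz]

section Trajectories

variable {E F : Type*} {f : E × F → E} {X : Set E} {U : Set F} {Xf : Set E}
  {ℓ : E × F → ℝ} {x : E} {u : ℕ → F} {N : ℕ}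

variable (f X U Xf) in
def admissible (N : ℕ) (x : E) : Set (ℕ → F) :=
  {u | FeasN f X U x N u ∧ traj f x u N ∈ Xf}

lemma traj_succ_eq_traj_tail (x : E) (u : ℕ → F) (k : ℕ) :
    traj f x u (k + 1) = traj f (f (x, u 0)) (fun j => u (j + 1)) k := by
  induction k with
  | zero => rfl
  | succ k ih => exact congrArg (fun y => f (y, u (k + 1))) ih

lemma traj_congr {v : ℕ → F} {n : ℕ} (h : ∀ k < n, u k = v k) :
    traj f x u n = traj f x v n := by
  induction n with
  | zero => rfl
  | succ n ih => simp only [traj, ih fun k hk => h k (by omega), h n (by omega)]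

lemma J1_congr {v : ℕ → F} {n : ℕ} (h : ∀ k < n, u k = v k) :
    J1 f ℓ x u n = J1 f ℓ x v n :=
  Finset.sum_congr rfl fun k hk => by
    have hk := Finset.mem_range.mp hk
    rw [traj_congr fun j hj => h j (by omega), h k hk]

lemma JN_succ (Vf : E → ℝ) (x : E) (u : ℕ → F) (N : ℕ) :
    JN f ℓ Vf x u (N + 1) = ℓ (x, u 0) + JN f ℓ Vf (f (x, u 0)) (fun k => u (k + 1)) N := by
  rw [JN, JN, J1, J1, Finset.sum_range_succ']
  simp only [traj_succ_eq_traj_tail]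
  rw [show traj f x u 0 = x from rfl]
  ring

lemma JN_succ_eq_J1_add (Vf : E → ℝ) (x : E) (u : ℕ → F) (N : ℕ) :
    JN f ℓ Vf x u (N + 1) =
      J1 f ℓ x u N + (ℓ (traj f x u N, u N) + Vf (f (traj f x u N, u N))) := by
  rw [JN, J1, Finset.sum_range_succ, add_assoc]
  rfl

/-- The standard MPC candidate input at the successor state `f (x, u 0)`. -/
def shiftInput (u : ℕ → F) (N : ℕ) (w : F) : ℕ → F :=
  fun k => if k < N then u (k + 1) else w

lemma traj_shiftInput {k : ℕ} (w : F) (hk : k ≤ N) :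
    traj f (f (x, u 0)) (shiftInput u N w) k = traj f x u (k + 1) := by
  rw [traj_succ_eq_traj_tail]
  exact traj_congr fun j hj => if_pos (by omega)

lemma shiftInput_mem_admissible {κ : E → F} (hκU : ∀ z ∈ Xf, κ z ∈ U)
    (hκXf : ∀ z ∈ Xf, f (z, κ z) ∈ Xf) (hXfX : Xf ⊆ X)
    (hu : u ∈ admissible f X U Xf (N + 1) x) :
    shiftInput u N (κ (traj f x u (N + 1))) ∈ admissible f X U Xf (N + 1) (f (x, u 0)) := by
  obtain ⟨⟨huU, huX⟩, huXf⟩ := hu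
  have hlast : traj f (f (x, u 0)) (shiftInput u N (κ (traj f x u (N + 1)))) (N + 1) =
      f (traj f x u (N + 1), κ (traj f x u (N + 1))) := by
    rw [traj, traj_shiftInput _ le_rfl, shiftInput, if_neg (lt_irrefl N)]
  refine ⟨⟨fun k hk => ?_, fun k hk => ?_⟩, hlast ▸ hκXf _ huXf⟩
  · unfold shiftInput
    split_ifs
    · exact huU _ (by omega)
    · exact hκU _ huXf
  · rcases hk.lt_or_eq with hk | rfl
    · rw [traj_shiftInput _ (by omega)]
      exact huX _ (by omega)
    · exact hlast ▸ hXfX (hκXf _ huXf)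

lemma JN_shiftInput_le {Vf : E → ℝ} {κ : E → F}
    (hterm : ℓ (traj f x u (N + 1), κ (traj f x u (N + 1))) +
      Vf (f (traj f x u (N + 1), κ (traj f x u (N + 1)))) ≤ Vf (traj f x u (N + 1))) :
    JN f ℓ Vf (f (x, u 0)) (shiftInput u N (κ (traj f x u (N + 1)))) (N + 1) ≤
      JN f ℓ Vf x u (N + 1) - ℓ (x, u 0) := by
  have hJ1 : J1 f ℓ (f (x, u 0)) (shiftInput u N (κ (traj f x u (N + 1)))) N =
      J1 f ℓ (f (x, u 0)) (fun k => u (k + 1)) N := J1_congr fun k hk => if_pos hk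
  rw [JN_succ_eq_J1_add, JN_succ, traj_shiftInput _ le_rfl, shiftInput, if_neg (lt_irrefl N),
    hJ1, JN, ← traj_succ_eq_traj_tail]
  linarith

lemma J1_nonneg (hℓ : ∀ a ∈ X, ∀ b ∈ U, f (a, b) ∈ X → 0 ≤ ℓ (a, b))
    (hu : FeasN f X U x N u) : 0 ≤ J1 f ℓ x u N :=
  Finset.sum_nonneg fun k hk => by
    have hk := Finset.mem_range.mp hk
    exact hℓ _ (hu.2 k hk.le) _ (hu.1 k hk) (hu.2 (k + 1) hk)

lemma JN_nonneg (hℓ : ∀ a ∈ X, ∀ b ∈ U, f (a, b) ∈ X → 0 ≤ ℓ (a, b)) {W : E → ℝ}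
    (hW : ∀ z ∈ Xf, 0 ≤ W z) (hu : u ∈ admissible f X U Xf N x) : 0 ≤ JN f ℓ W x u N :=
  add_nonneg (J1_nonneg hℓ hu.1) (hW _ hu.2)

lemma stage_le_JN (hℓ : ∀ a ∈ X, ∀ b ∈ U, f (a, b) ∈ X → 0 ≤ ℓ (a, b)) {W : E → ℝ}
    (hW : ∀ z ∈ Xf, 0 ≤ W z) (hu : u ∈ admissible f X U Xf (N + 1) x) :
    ℓ (x, u 0) ≤ JN f ℓ W x u (N + 1) := by
  have htail : (fun k => u (k + 1)) ∈ admissible f X U Xf N (f (x, u 0)) := by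
    obtain ⟨⟨huU, huX⟩, huXf⟩ := hu
    refine ⟨⟨fun k hk => huU _ (by omega), fun k hk => ?_⟩, ?_⟩
    · exact traj_succ_eq_traj_tail x u k ▸ huX _ (by omega)
    · exact traj_succ_eq_traj_tail x u N ▸ huXf
  rw [JN_succ]
  linarith [JN_nonneg hℓ hW htail]

lemma bddBelow_JN_image (hℓ : ∀ a ∈ X, ∀ b ∈ U, f (a, b) ∈ X → 0 ≤ ℓ (a, b)) {W : E → ℝ}
    (hW : ∀ z ∈ Xf, 0 ≤ W z) :
    BddBelow ((fun v => JN f ℓ W x v N) '' admissible f X U Xf N x) :=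
  ⟨0, by rintro _ ⟨v, hv, rfl⟩; exact JN_nonneg hℓ hW hv⟩

lemma VN_le_JN_of_nonneg (hℓ : ∀ a ∈ X, ∀ b ∈ U, f (a, b) ∈ X → 0 ≤ ℓ (a, b)) {W : E → ℝ}
    (hW : ∀ z ∈ Xf, 0 ≤ W z) (hu : u ∈ admissible f X U Xf N x) :
    VN f X U ℓ W Xf N x ≤ JN f ℓ W x u N :=
  csInf_le (bddBelow_JN_image hℓ hW) ⟨u, hu, rfl⟩

lemma VN_succ_le (hℓ : ∀ a ∈ X, ∀ b ∈ U, f (a, b) ∈ X → 0 ≤ ℓ (a, b)) {W : E → ℝ}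
    (hW : ∀ z ∈ Xf, 0 ≤ W z) {κ : E → F} (hκU : ∀ z ∈ Xf, κ z ∈ U)
    (hκXf : ∀ z ∈ Xf, f (z, κ z) ∈ Xf) (hXfX : Xf ⊆ X)
    (hterm : ∀ z ∈ Xf, ℓ (z, κ z) + W (f (z, κ z)) ≤ W z)
    (hu : u ∈ admissible f X U Xf (N + 1) x) :
    VN f X U ℓ W Xf (N + 1) (f (x, u 0)) ≤ JN f ℓ W x u (N + 1) - ℓ (x, u 0) :=
  (VN_le_JN_of_nonneg hℓ hW (shiftInput_mem_admissible hκU hκXf hXfX hu)).trans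
    (JN_shiftInput_le (hterm _ hu.2))

lemma VN_eq_add_of_JN_eq_add {ℓ' : E × F → ℝ} {Vf W : E → ℝ} {c : ℝ}
    (hJ : ∀ v, JN f ℓ' W x v N = JN f ℓ Vf x v N + c) (hx : x ∈ XN f X U Xf N)
    (hbdd : BddBelow ((fun v => JN f ℓ' W x v N) '' admissible f X U Xf N x)) :
    VN f X U ℓ' W Xf N x = VN f X U ℓ Vf Xf N x + c := by
  have himage : (fun v => JN f ℓ' W x v N) '' admissible f X U Xf N x =
      (fun r => r + c) '' ((fun v => JN f ℓ Vf x v N) '' admissible f X U Xf N x) := by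
    rw [Set.image_image]
    simp only [hJ]
  obtain ⟨m, hm⟩ := hbdd
  have hbdd' : BddBelow ((fun v => JN f ℓ Vf x v N) '' admissible f X U Xf N x) := by
    refine ⟨m - c, ?_⟩
    rintro _ ⟨v, hv, rfl⟩
    linarith [hm ⟨v, hv, rfl⟩, hJ v]
  have hne : (admissible f X U Xf N x).Nonempty := hx
  change sInf ((fun v => JN f ℓ' W x v N) '' admissible f X U Xf N x) =
    sInf ((fun v => JN f ℓ Vf x v N) '' admissible f X U Xf N x) + c
  rw [himage]
  exact ((OrderIso.addRight c).map_csInf' (hne.image _) hbdd').symm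

end Trajectories

lemma eq_zero_of_sum_range_eq_zero_of_succ_eq {v : ℕ → ℝ} {p : ℕ}
    (hstep : ∀ i, i + 1 < p → v (i + 1) = v i) (hsum : ∑ i ∈ Finset.range p, v i = 0) :
    ∀ i < p, v i = 0 := by
  have hconst : ∀ i < p, v i = v 0 := by
    intro i hi
    induction i with
    | zero => rfl
    | succ i ih => rw [hstep i hi, ih (by omega)]
  intro i hi
  rw [Finset.sum_congr rfl fun j hj => hconst j (Finset.mem_range.mp hj), Finset.sum_const,
    Finset.card_range, nsmul_eq_mul, mul_eq_zero] at hsum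
  rw [hconst i hi]
  exact hsum.resolve_left (by exact_mod_cast (by omega : p ≠ 0))

section RotatedProblem

variable {E F : Type*} {f : E × F → E} {X : Set E} {U : Set F} {Xf : Set E} {p : ℕ}
  {PX : ℕ → E} {PU : ℕ → F}

lemma mul_avgCost (ℓ : E × F → ℝ) (hp : 0 < p) :
    p * avgCost ℓ p PX PU = ∑ i ∈ Finset.range p, ℓ (PX i, PU i) := by
  rw [avgCost, ← mul_assoc, mul_one_div_cancel (by positivity), one_mul]

lemma mul_avgOrbit (g : E → ℝ) (hp : 0 < p) :
    p * avgOrbit g p PX = ∑ i ∈ Finset.range p, g (PX i) := by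
  rw [avgOrbit, ← mul_assoc, mul_one_div_cancel (by positivity), one_mul]

/-- The rotated terminal cost `Ṽ_f = V_f + λ - V_{Π*} - λ_{Π*}`. -/
noncomputable def rotTerminal (Vf lam : E → ℝ) (p : ℕ) (PX : ℕ → E) (y : E) : ℝ :=
  Vf y + lam y - avgOrbit Vf p PX - avgOrbit lam p PX

lemma J1_rotCost (ℓ : E × F → ℝ) (lam : E → ℝ) (lp : ℝ) (x : E) (u : ℕ → F) (n : ℕ) :
    J1 f (rotCost f ℓ lam lp) x u n = J1 f ℓ x u n - n * lp + lam x - lam (traj f x u n) := by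
  induction n with
  | zero => simp [J1, traj]
  | succ n ih =>
    simp only [J1, Finset.sum_range_succ] at ih ⊢
    rw [ih]
    simp only [rotCost, traj]
    push_cast
    ring

lemma JN_rotCost_rotTerminal (ℓ : E × F → ℝ) (Vf lam : E → ℝ) (lp : ℝ) (x : E) (u : ℕ → F)
    (N : ℕ) :
    JN f (rotCost f ℓ lam lp) (rotTerminal Vf lam p PX) x u N =
      JN f ℓ Vf x u N + (lam x - (avgOrbit Vf p PX + avgOrbit lam p PX) - N * lp) := by
  rw [JN, JN, J1_rotCost, rotTerminal]
  ring

lemma VN_rotCost_eq {ℓ : E × F → ℝ} {Vf lam : E → ℝ} {lp : ℝ}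
    (hℓ : ∀ a ∈ X, ∀ b ∈ U, f (a, b) ∈ X → 0 ≤ rotCost f ℓ lam lp (a, b))
    (hW : ∀ z ∈ Xf, 0 ≤ rotTerminal Vf lam p PX z) {N : ℕ} {x : E} (hx : x ∈ XN f X U Xf N) :
    VN f X U (rotCost f ℓ lam lp) (rotTerminal Vf lam p PX) Xf N x =
      VN f X U ℓ Vf Xf N x + (lam x - (avgOrbit Vf p PX + avgOrbit lam p PX) - N * lp) :=
  VN_eq_add_of_JN_eq_add (JN_rotCost_rotTerminal ℓ Vf lam lp x · N) hx (bddBelow_JN_image hℓ hW)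

lemma VN_rotCost_eq_JN {ℓ : E × F → ℝ} {Vf lam : E → ℝ} {lp : ℝ}
    (hℓ : ∀ a ∈ X, ∀ b ∈ U, f (a, b) ∈ X → 0 ≤ rotCost f ℓ lam lp (a, b))
    (hW : ∀ z ∈ Xf, 0 ≤ rotTerminal Vf lam p PX z) {N : ℕ} {x : E} {u : ℕ → F}
    (hu : u ∈ admissible f X U Xf N x) (hopt : JN f ℓ Vf x u N = VN f X U ℓ Vf Xf N x) :
    VN f X U (rotCost f ℓ lam lp) (rotTerminal Vf lam p PX) Xf N x =
      JN f (rotCost f ℓ lam lp) (rotTerminal Vf lam p PX) x u N := by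
  rw [VN_rotCost_eq hℓ hW ⟨u, hu⟩, JN_rotCost_rotTerminal, hopt]

lemma rotCost_add_rotTerminal_le {ℓ : E × F → ℝ} {Vf lam : E → ℝ} {lp : ℝ} {uf : E → F}
    (hufD : ∀ x ∈ Xf, Vf (f (x, uf x)) + ℓ (x, uf x) - lp ≤ Vf x)
    {x : E} (hx : x ∈ Xf) :
    rotCost f ℓ lam lp (x, uf x) + rotTerminal Vf lam p PX (f (x, uf x)) ≤
      rotTerminal Vf lam p PX x := by
  simp only [rotTerminal, rotCost]
  linarith [hufD x hx]

namespace FeasOrbit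

variable (horb : FeasOrbit f X U p PX PU) (hp : 0 < p)
include horb hp

lemma traj_shift {i : ℕ} (hi : i < p) (k : ℕ) :
    traj f (PX i) (fun j => PU ((i + j) % p)) k = PX ((i + k) % p) := by
  induction k with
  | zero => simp [traj, Nat.mod_eq_of_lt hi]
  | succ k ih =>
    rw [traj, ih, ← horb.2.2 _ (Nat.mod_lt _ hp), ← add_assoc, Nat.add_mod _ 1, Nat.mod_mod,
      ← Nat.add_mod]

lemma shift_mem_admissible (hPXf : ∀ i < p, PX i ∈ Xf) {i : ℕ} (hi : i < p)
    (N : ℕ) : (fun j => PU ((i + j) % p)) ∈ admissible f X U Xf N (PX i) := by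
  refine ⟨⟨fun k _ => horb.2.1 _ (Nat.mod_lt _ hp), fun k _ => ?_⟩, ?_⟩
  · rw [horb.traj_shift hp hi]
    exact horb.1 _ (Nat.mod_lt _ hp)
  · rw [horb.traj_shift hp hi]
    exact hPXf _ (Nat.mod_lt _ hp)

lemma sum_rotCost_eq_zero (ℓ : E × F → ℝ) (lam : E → ℝ) :
    ∑ i ∈ Finset.range p, rotCost f ℓ lam (avgCost ℓ p PX PU) (PX i, PU i) = 0 := by
  have hlam : ∑ i ∈ Finset.range p, (lam (PX (i % p)) - lam (PX ((i + 1) % p))) = 0 := by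
    rw [Finset.sum_range_sub' (fun i => lam (PX (i % p))), Nat.zero_mod, Nat.mod_self, sub_self]
  have hterm : ∀ i ∈ Finset.range p, rotCost f ℓ lam (avgCost ℓ p PX PU) (PX i, PU i) =
      (ℓ (PX i, PU i) - avgCost ℓ p PX PU) + (lam (PX (i % p)) - lam (PX ((i + 1) % p))) := by
    intro i hi
    rw [Finset.mem_range] at hi
    simp only [rotCost]
    rw [← horb.2.2 i hi, Nat.mod_eq_of_lt hi]
    ring
  rw [Finset.sum_congr rfl hterm, Finset.sum_add_distrib, hlam, Finset.sum_sub_distrib,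
    Finset.sum_const, Finset.card_range, nsmul_eq_mul, mul_avgCost ℓ hp]
  ring

variable {ℓ : E × F → ℝ} {lam : E → ℝ}
  (hℓ : ∀ a ∈ X, ∀ b ∈ U, f (a, b) ∈ X → 0 ≤ rotCost f ℓ lam (avgCost ℓ p PX PU) (a, b))
include hℓ

lemma rotCost_eq_zero {i : ℕ} (hi : i < p) :
    rotCost f ℓ lam (avgCost ℓ p PX PU) (PX i, PU i) = 0 := by
  have hnonneg : ∀ j ∈ Finset.range p, 0 ≤ rotCost f ℓ lam (avgCost ℓ p PX PU) (PX j, PU j) := by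
    intro j hj
    rw [Finset.mem_range] at hj
    exact hℓ _ (horb.1 j hj) _ (horb.2.1 j hj) (horb.2.2 j hj ▸ horb.1 _ (Nat.mod_lt _ hp))
  exact (Finset.sum_eq_zero_iff_of_nonneg hnonneg).mp (horb.sum_rotCost_eq_zero hp ℓ lam) i
    (Finset.mem_range.mpr hi)

/-- Along the orbit `V_f + λ` is constant by A4, so its centred version vanishes. -/
lemma rotTerminal_eq_zero {Vf : E → ℝ}
    (hA4 : ∀ i < p, Vf (PX i) = ℓ (PX i, PU i) - avgCost ℓ p PX PU + Vf (f (PX i, PU i)))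
    {i : ℕ} (hi : i < p) : rotTerminal Vf lam p PX (PX i) = 0 := by
  refine eq_zero_of_sum_range_eq_zero_of_succ_eq (v := fun i => rotTerminal Vf lam p PX (PX i))
    (fun j hj => ?_) ?_ i hi
  · have hnext : f (PX j, PU j) = PX (j + 1) := by
      rw [← horb.2.2 j (by omega), Nat.mod_eq_of_lt hj]
    have hzero := horb.rotCost_eq_zero hp hℓ (i := j) (by omega)
    have hA4j := hA4 j (by omega)
    simp only [rotCost, rotTerminal] at hzero ⊢
    rw [hnext] at hzero hA4j
    linarith
  · simp only [rotTerminal, Finset.sum_sub_distrib, Finset.sum_add_distrib, Finset.sum_const,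
      Finset.card_range, nsmul_eq_mul, mul_avgOrbit _ hp]
    ring

lemma JN_rotCost_shift_eq_zero {Vf : E → ℝ}
    (hA4 : ∀ i < p, Vf (PX i) = ℓ (PX i, PU i) - avgCost ℓ p PX PU + Vf (f (PX i, PU i)))
    {i : ℕ} (hi : i < p) (N : ℕ) :
    JN f (rotCost f ℓ lam (avgCost ℓ p PX PU)) (rotTerminal Vf lam p PX) (PX i)
      (fun j => PU ((i + j) % p)) N = 0 := by
  rw [JN, J1, horb.traj_shift hp hi, horb.rotTerminal_eq_zero hp hℓ hA4 (Nat.mod_lt _ hp),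
    add_zero]
  exact Finset.sum_eq_zero fun k _ => by
    rw [horb.traj_shift hp hi, horb.rotCost_eq_zero hp hℓ (Nat.mod_lt _ hp)]

end FeasOrbit

end RotatedProblem

section Dissipativity

variable {E F : Type*} [NormedAddCommGroup E] [NormedAddCommGroup F]
  {f : E × F → E} {X : Set E} {U : Set F} {p : ℕ} {PX : ℕ → E} {PU : ℕ → F}
  {ℓ : E × F → ℝ} {lam : E → ℝ} {αl : ℝ → ℝ}

lemma exists_norm_sub_eq_distOrbitX (hp : 0 < p) (x : E) :
    ∃ i < p, ‖x - PX i‖ = distOrbitX p PX x := by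
  have : Nonempty (Fin p) := ⟨⟨0, hp⟩⟩
  obtain ⟨i, hi⟩ := exists_eq_ciInf_of_finite (f := fun i : Fin p => ‖x - PX i‖)
  exact ⟨i, i.isLt, hi⟩

lemma exists_dist_lt_of_distOrbit_lt (hp : 0 < p) {x : E} {u : F} {δ : ℝ}
    (h : distOrbit p (fun i => (PX i, PU i)) (x, u) < δ) : ∃ i < p, dist x (PX i) < δ := by
  have : Nonempty (Fin p) := ⟨⟨0, hp⟩⟩
  obtain ⟨i, hi⟩ := exists_lt_of_ciInf_lt h
  exact ⟨i, i.isLt, (dist_eq_norm x _).symm ▸ (norm_fst_le _).trans_lt hi⟩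

lemma rotCost_nonneg_of_dissipative (hαl : IsKInf αl)
    (hdiss : ∀ x ∈ X, ∀ u ∈ U, f (x, u) ∈ X →
      αl (distOrbit p (fun i => (PX i, PU i)) (x, u)) ≤
        rotCost f ℓ lam (avgCost ℓ p PX PU) (x, u)) :
    ∀ x ∈ X, ∀ u ∈ U, f (x, u) ∈ X → 0 ≤ rotCost f ℓ lam (avgCost ℓ p PX PU) (x, u) :=
  fun x hx u hu hxu =>
    (hαl.nonneg (Real.iInf_nonneg fun _ => norm_nonneg _)).trans (hdiss x hx u hu hxu)

lemma rotTerminal_nonneg (horb : FeasOrbit f X U p PX PU) (hp : 0 < p) (hαl : IsKInf αl)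
    (hdiss : ∀ x ∈ X, ∀ u ∈ U, f (x, u) ∈ X →
      αl (distOrbit p (fun i => (PX i, PU i)) (x, u)) ≤
        rotCost f ℓ lam (avgCost ℓ p PX PU) (x, u))
    {Xf : Set E} (hXfc : IsCompact Xf) (hXfX : Xf ⊆ X) (hPXf : ∀ i < p, PX i ∈ Xf)
    {Vf : E → ℝ} (hVfc : ContinuousOn Vf Xf) (hlamc : ContinuousOn lam X) {uf : E → F}
    (hufU : ∀ x ∈ Xf, uf x ∈ U) (hufXf : ∀ x ∈ Xf, f (x, uf x) ∈ Xf)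
    (hufD : ∀ x ∈ Xf, Vf (f (x, uf x)) + ℓ (x, uf x) - avgCost ℓ p PX PU ≤ Vf x)
    (hA4 : ∀ i < p, Vf (PX i) = ℓ (PX i, PU i) - avgCost ℓ p PX PU + Vf (f (PX i, PU i))) :
    ∀ x ∈ Xf, 0 ≤ rotTerminal Vf lam p PX x := by
  have hℓ := rotCost_nonneg_of_dissipative hαl hdiss
  refine hXfc.nonneg_of_descent (Z := {z | ∃ i < p, PX i = z}) (s := fun z => f (z, uf z))
    (c := fun z => rotCost f ℓ lam (avgCost ℓ p PX PU) (z, uf z)) ?_ ?_ ?_ hufXf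
    (fun y hy => hℓ _ (hXfX hy) _ (hufU y hy) (hXfX (hufXf y hy))) ?_ ?_
  · exact ((hVfc.add (hlamc.mono hXfX)).sub continuousOn_const).sub continuousOn_const
  · rintro _ ⟨i, hi, rfl⟩
    exact hPXf i hi
  · rintro _ ⟨i, hi, rfl⟩
    exact (horb.rotTerminal_eq_zero hp hℓ hA4 hi).ge
  · intro δ hδ
    refine ⟨αl δ, hαl.pos hδ, fun y hy hyδ => ?_⟩
    have hdist : distOrbit p (fun i => (PX i, PU i)) (y, uf y) < δ := by
      by_contra! hge
      have := hαl.monotoneOn hδ.le (hδ.le.trans hge) hge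
      linarith [hdiss y (hXfX hy) _ (hufU y hy) (hXfX (hufXf y hy))]
    obtain ⟨i, hi, hyi⟩ := exists_dist_lt_of_distOrbit_lt hp hdist
    exact ⟨PX i, ⟨i, hi, rfl⟩, hyi⟩
  · exact fun y hy => add_comm (rotTerminal Vf lam p PX _) _ ▸ rotCost_add_rotTerminal_le hufD hy

end Dissipativity

theorem stmt3_general
    (dn dm : ℕ)
    (X : Set (EuclideanSpace ℝ (Fin dn))) (U : Set (EuclideanSpace ℝ (Fin dm)))
    (f : EuclideanSpace ℝ (Fin dn) × EuclideanSpace ℝ (Fin dm) → EuclideanSpace ℝ (Fin dn))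
    (ℓ : EuclideanSpace ℝ (Fin dn) × EuclideanSpace ℝ (Fin dm) → ℝ)
    (p : ℕ) (hp : 0 < p)
    (PX : ℕ → EuclideanSpace ℝ (Fin dn)) (PU : ℕ → EuclideanSpace ℝ (Fin dm))
    (hopt : IsOptimalOrbit f X U ℓ p PX PU)
    -- A1 (continuity and compactness)
    (hcomp : IsCompact (X ×ˢ U))
    -- A2 (strict dissipativity)
    (lam : EuclideanSpace ℝ (Fin dn) → ℝ) (hlamc : ContinuousOn lam X)
    (αl : ℝ → ℝ) (hαl : IsKInf αl)
    (hdiss : ∀ x ∈ X, ∀ u ∈ U, f (x, u) ∈ X →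
      αl (distOrbit p (fun i => (PX i, PU i)) (x, u)) ≤
        rotCost f ℓ lam (avgCost ℓ p PX PU) (x, u))
    -- A3 (terminal conditions)
    (Xf : Set (EuclideanSpace ℝ (Fin dn))) (hXfc : IsCompact Xf) (hXfX : Xf ⊆ X)
    (hPXf : ∀ i < p, PX i ∈ Xf)
    (Vf : EuclideanSpace ℝ (Fin dn) → ℝ) (hVfc : ContinuousOn Vf Xf)
    (uf : EuclideanSpace ℝ (Fin dn) → EuclideanSpace ℝ (Fin dm))
    (hufU : ∀ x ∈ Xf, uf x ∈ U)
    (hufXf : ∀ x ∈ Xf, f (x, uf x) ∈ Xf)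
    (hufD : ∀ x ∈ Xf, Vf (f (x, uf x)) + ℓ (x, uf x) - avgCost ℓ p PX PU ≤ Vf x)
    -- A4 (terminal cost on the optimal orbit)
    (hA4 : ∀ i < p, Vf (PX i) = ℓ (PX i, PU i) - avgCost ℓ p PX PU + Vf (f (PX i, PU i)))
    -- A5 (bound on V_N)
    (γV : ℝ → ℝ) (hγV : IsKInf γV)
    (hA5 : ∀ N : ℕ, 0 < N → ∀ x ∈ XN f X U Xf N, ∀ i < p,
      ‖x - PX i‖ = distOrbitX p PX x →
      |VN f X U ℓ Vf Xf N x - VN f X U ℓ Vf Xf N (PX i)| ≤ γV (distOrbitX p PX x))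
    -- EMPC horizon and feedback law μ_N (first element of a minimizer)
    (N : ℕ) (hN : 0 < N)
    (μ : EuclideanSpace ℝ (Fin dn) → EuclideanSpace ℝ (Fin dm))
    (hμ : ∀ x ∈ XN f X U Xf N, ∃ u : ℕ → EuclideanSpace ℝ (Fin dm),
      FeasN f X U x N u ∧ traj f x u N ∈ Xf ∧
        JN f ℓ Vf x u N = VN f X U ℓ Vf Xf N x ∧ μ x = u 0) :
    ∃ α1 α2 : ℝ → ℝ, IsKInf α1 ∧ IsKInf α2 ∧
      ∀ x ∈ XN f X U Xf N,
        α1 (distOrbit p (fun i => (PX i, PU i)) (x, μ x)) ≤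
            VN f X U (rotCost f ℓ lam (avgCost ℓ p PX PU)) (fun y => Vf y + lam y - avgOrbit Vf p PX - avgOrbit lam p PX) Xf N x ∧
          VN f X U (rotCost f ℓ lam (avgCost ℓ p PX PU)) (fun y => Vf y + lam y - avgOrbit Vf p PX - avgOrbit lam p PX) Xf N x ≤ α2 (distOrbitX p PX x) ∧
          VN f X U (rotCost f ℓ lam (avgCost ℓ p PX PU)) (fun y => Vf y + lam y - avgOrbit Vf p PX - avgOrbit lam p PX) Xf N (f (x, μ x)) -
              VN f X U (rotCost f ℓ lam (avgCost ℓ p PX PU)) (fun y => Vf y + lam y - avgOrbit Vf p PX - avgOrbit lam p PX) Xf N x ≤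
            -(rotCost f ℓ lam (avgCost ℓ p PX PU) (x, μ x)) := by
  rw [show (fun y => Vf y + lam y - avgOrbit Vf p PX - avgOrbit lam p PX) =
    rotTerminal Vf lam p PX from rfl]
  obtain ⟨N, rfl⟩ : ∃ M, N = M + 1 := ⟨N - 1, by omega⟩
  have hℓ := rotCost_nonneg_of_dissipative hαl hdiss
  have hVf := rotTerminal_nonneg hopt.1 hp hαl hdiss hXfc hXfX hPXf hVfc hlamc hufU hufXf hufD hA4
  have hXc : IsCompact X :=
    Set.fst_image_prod X ⟨PU 0, hopt.1.2.1 0 hp⟩ ▸ hcomp.image continuous_fst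
  obtain ⟨β, hβ, hβlam⟩ := hXc.exists_isKInf_modulus hlamc
  refine ⟨αl, fun t => γV t + β t, hαl, hγV.add_monotoneOn hβ.1 hβ.monotoneOn hβ.2.2.1,
    fun x hx => ?_⟩
  obtain ⟨u, hu, huXf, huV, hμu⟩ := hμ x hx
  have hVx := VN_rotCost_eq_JN hℓ hVf ⟨hu, huXf⟩ huV
  rw [hμu]
  refine ⟨?_, ?_, ?_⟩
  · have hstage := hdiss x (hu.2 0 (by omega)) _ (hu.1 0 (by omega)) (hu.2 1 (by omega))
    linarith [stage_le_JN hℓ hVf ⟨hu, huXf⟩]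
  · obtain ⟨i, hi, hxi⟩ := exists_norm_sub_eq_distOrbitX hp x
    have horbit := hopt.1.shift_mem_admissible hp hPXf hi (N + 1)
    have hVi := (VN_le_JN_of_nonneg hℓ hVf horbit).trans
      (hopt.1.JN_rotCost_shift_eq_zero hp hℓ hA4 hi _).le
    rw [VN_rotCost_eq hℓ hVf ⟨_, horbit⟩] at hVi
    rw [VN_rotCost_eq hℓ hVf hx]
    have hV := abs_le.mp (hA5 _ hN x hx i hi hxi)
    have hlam := abs_le.mp (hβlam x (hu.2 0 (by omega)) _ (hopt.1.1 i hi))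
    rw [dist_eq_norm, hxi] at hlam
    linarith
  · linarith [VN_succ_le hℓ hVf hufU hufXf hXfX (fun z hz => rotCost_add_rotTerminal_le hufD hz)
      ⟨hu, huXf⟩]

theorem stmt3
    (dn dm : ℕ)
    (X : Set (EuclideanSpace ℝ (Fin dn))) (U : Set (EuclideanSpace ℝ (Fin dm)))
    (f : EuclideanSpace ℝ (Fin dn) × EuclideanSpace ℝ (Fin dm) → EuclideanSpace ℝ (Fin dn))
    (ℓ : EuclideanSpace ℝ (Fin dn) × EuclideanSpace ℝ (Fin dm) → ℝ)
    (p : ℕ) (hp : 0 < p)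
    (PX : ℕ → EuclideanSpace ℝ (Fin dn)) (PU : ℕ → EuclideanSpace ℝ (Fin dm))
    (hopt : IsOptimalOrbit f X U ℓ p PX PU)
    -- A1 (continuity and compactness)
    (hcomp : IsCompact (X ×ˢ U))
    (hfc : ContinuousOn f (X ×ˢ U)) (hlc : ContinuousOn ℓ (X ×ˢ U))
    -- A2 (strict dissipativity)
    (lam : EuclideanSpace ℝ (Fin dn) → ℝ) (hlamc : ContinuousOn lam X)
    (αl : ℝ → ℝ) (hαl : IsKInf αl)
    (hdiss : ∀ x ∈ X, ∀ u ∈ U, f (x, u) ∈ X →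
      αl (distOrbit p (fun i => (PX i, PU i)) (x, u)) ≤
        rotCost f ℓ lam (avgCost ℓ p PX PU) (x, u))
    -- A3 (terminal conditions)
    (Xf : Set (EuclideanSpace ℝ (Fin dn))) (hXfc : IsCompact Xf) (hXfX : Xf ⊆ X)
    (hPXf : ∀ i < p, PX i ∈ Xf)
    (Vf : EuclideanSpace ℝ (Fin dn) → ℝ) (hVfc : ContinuousOn Vf Xf)
    (uf : EuclideanSpace ℝ (Fin dn) → EuclideanSpace ℝ (Fin dm))
    (hufU : ∀ x ∈ Xf, uf x ∈ U) (hufX : ∀ x ∈ Xf, f (x, uf x) ∈ X)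
    (hufXf : ∀ x ∈ Xf, f (x, uf x) ∈ Xf)
    (hufD : ∀ x ∈ Xf, Vf (f (x, uf x)) + ℓ (x, uf x) - avgCost ℓ p PX PU ≤ Vf x)
    -- A4 (terminal cost on the optimal orbit)
    (hA4 : ∀ i < p, Vf (PX i) = ℓ (PX i, PU i) - avgCost ℓ p PX PU + Vf (f (PX i, PU i)))
    -- A5 (bound on V_N)
    (γV : ℝ → ℝ) (hγV : IsKInf γV)
    (hA5 : ∀ N : ℕ, 0 < N → ∀ x ∈ XN f X U Xf N, ∀ i < p,
      ‖x - PX i‖ = distOrbitX p PX x →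
      |VN f X U ℓ Vf Xf N x - VN f X U ℓ Vf Xf N (PX i)| ≤ γV (distOrbitX p PX x))
    -- EMPC horizon and feedback law μ_N (first element of a minimizer)
    (N : ℕ) (hN : 0 < N)
    (μ : EuclideanSpace ℝ (Fin dn) → EuclideanSpace ℝ (Fin dm))
    (hμ : ∀ x ∈ XN f X U Xf N, ∃ u : ℕ → EuclideanSpace ℝ (Fin dm),
      FeasN f X U x N u ∧ traj f x u N ∈ Xf ∧
        JN f ℓ Vf x u N = VN f X U ℓ Vf Xf N x ∧ μ x = u 0) :
    ∃ α1 α2 : ℝ → ℝ, IsKInf α1 ∧ IsKInf α2 ∧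
      ∀ x ∈ XN f X U Xf N,
        α1 (distOrbit p (fun i => (PX i, PU i)) (x, μ x)) ≤
            VN f X U (rotCost f ℓ lam (avgCost ℓ p PX PU)) (fun y => Vf y + lam y - avgOrbit Vf p PX - avgOrbit lam p PX) Xf N x ∧
          VN f X U (rotCost f ℓ lam (avgCost ℓ p PX PU)) (fun y => Vf y + lam y - avgOrbit Vf p PX - avgOrbit lam p PX) Xf N x ≤ α2 (distOrbitX p PX x) ∧
          VN f X U (rotCost f ℓ lam (avgCost ℓ p PX PU)) (fun y => Vf y + lam y - avgOrbit Vf p PX - avgOrbit lam p PX) Xf N (f (x, μ x)) -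
              VN f X U (rotCost f ℓ lam (avgCost ℓ p PX PU)) (fun y => Vf y + lam y - avgOrbit Vf p PX - avgOrbit lam p PX) Xf N x ≤
            -(rotCost f ℓ lam (avgCost ℓ p PX PU) (x, μ x)) :=
  stmt3_general dn dm X U f ℓ p hp PX PU hopt hcomp lam hlamc αl hαl hdiss Xf hXfc hXfX hPXf Vf hVfc
    uf hufU hufXf hufD hA4 γV hγV hA5 N hN μ hμ
end
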